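/- Every odd-cycle-free colouring is isomorphic to a δ-colouring: if c : [X]² → κ has no monochromatic odd cycles, then there is an injective ι : X → 2^κ such that for all distinct x, y ∈ X, ι(x)(c(x,y)) ≠ ι(y)(c(x,y)). -/

import Mathlib

/-!
For each colour `α` the graph of `α`-coloured pairs has no odd cycle. An odd closed walk always
contains an odd cycle (split it at a repeated vertex: one of the two closed walks is odd and
shorter), so this graph has no odd closed walk and is therefore 2-colourable. Letting `ι x α` be
the colour of `x` in a fixed 2-colouring of the `α`-graph separates `x` and `y` at `c x y`, which
in particular makes `ι` injective.
-/

/-- `c` has a monochromatic odd cycle. -/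
def HasMonoOddCycle {X C : Type*} (c : X → X → C) : Prop :=
  ∃ k : ℕ, 3 ≤ k ∧ Odd k ∧ ∃ x : ZMod k → X, Function.Injective x ∧
    ∃ m : C, ∀ j : ZMod k, c (x j) (x (j + 1)) = m

section OddCycle

variable {X : Type*} {R : X → X → Prop}

/-- A closed walk of length `n`, indexed cyclically. -/
def IsCyclicWalk (R : X → X → Prop) {n : ℕ} (w : ZMod n → X) : Prop :=
  ∀ j, R (w j) (w (j + 1))

def HasOddCycle (R : X → X → Prop) : Prop :=
  ∃ k, 3 ≤ k ∧ Odd k ∧ ∃ x : ZMod k → X, Function.Injective x ∧ IsCyclicWalk R x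

theorem isCyclicWalk_of_closed {n : ℕ} [NeZero n] {f : ℕ → X}
    (hf : ∀ i < n, R (f i) (f (i + 1))) (hclosed : f n = f 0) :
    IsCyclicWalk R fun j : ZMod n => f j.val := by
  intro j
  show R (f j.val) (f (j + 1).val)
  have hval : (j + 1).val = (j.val + 1) % n := by
    rw [ZMod.val_add, ZMod.val_one_eq_one_mod, Nat.add_mod_mod]
  rcases (show j.val + 1 ≤ n from j.val_lt).lt_or_eq with hlt | heq
  · rw [hval, Nat.mod_eq_of_lt hlt]
    exact hf _ j.val_lt
  · have hstep := hf _ j.val_lt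
    rw [heq] at hstep
    rwa [hval, heq, Nat.mod_self, ← hclosed]

theorem IsCyclicWalk.arc {n : ℕ} [NeZero n] {w : ZMod n → X} (hw : IsCyclicWalk R w)
    {a : ZMod n} {d : ℕ} [NeZero d] (hd : w (a + d) = w a) :
    IsCyclicWalk R fun m : ZMod d => w (a + m.val) :=
  isCyclicWalk_of_closed (f := fun i => w (a + i))
    (fun i _ => by simpa only [Nat.cast_succ, add_assoc] using hw (a + i))
    (by simpa only [Nat.cast_zero, add_zero] using hd)

theorem IsCyclicWalk.hasOddCycle (hirr : ∀ x, ¬ R x x) {n : ℕ} (hn : Odd n) {w : ZMod n → X}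
    (hw : IsCyclicWalk R w) : HasOddCycle R := by
  induction n using Nat.strong_induction_on with
  | _ n ih =>
  have : NeZero n := ⟨hn.pos.ne'⟩
  by_cases hinj : Function.Injective w
  · refine ⟨n, ?_, hn, w, hinj, hw⟩
    have hn1 : n ≠ 1 := by
      rintro rfl
      exact hirr _ (by simpa only [Subsingleton.elim (0 + 1 : ZMod 1) 0] using hw 0)
    obtain ⟨k, rfl⟩ := hn
    omega
  -- a repeated vertex splits the walk into two closed walks whose lengths add up to `n`
  have split : ∀ a b, w b = w a → a ≠ b → Odd (b - a).val → HasOddCycle R := by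
    intro a b hab hne hodd
    have : NeZero (b - a).val := ⟨hodd.pos.ne'⟩
    refine ih _ (b - a).val_lt hodd (hw.arc (a := a) ?_)
    rwa [ZMod.natCast_zmod_val, add_sub_cancel]
  obtain ⟨a, b, hab, hne⟩ : ∃ a b, w b = w a ∧ a ≠ b := by
    simp only [Function.Injective, not_forall] at hinj
    obtain ⟨a, b, hab, hne⟩ := hinj
    exact ⟨b, a, hab, Ne.symm hne⟩
  have : NeZero (b - a) := ⟨sub_ne_zero.mpr hne.symm⟩
  have hsum : (b - a).val + (a - b).val = n := by
    rw [← neg_sub b a, ZMod.val_neg_of_ne_zero]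
    have := (b - a).val_lt
    omega
  rcases Nat.even_or_odd (b - a).val with heven | hodd
  · exact split b a hab.symm hne.symm ((Nat.odd_add'.mp (hsum.symm ▸ hn)).mpr heven)
  · exact split a b hab hne hodd

theorem SimpleGraph.colorable_two_of_not_hasOddCycle {G : SimpleGraph X}
    (hG : ¬ HasOddCycle G.Adj) : G.Colorable 2 := by
  refine two_colorable_iff_forall_loop_even.mpr fun u w => Nat.not_odd_iff_even.mp fun hodd => ?_
  have : NeZero w.length := ⟨hodd.pos.ne'⟩
  have hw : IsCyclicWalk G.Adj fun j : ZMod w.length => w.getVert j.val :=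
    isCyclicWalk_of_closed (fun _ => w.adj_getVert_succ) (by rw [w.getVert_length, w.getVert_zero])
  exact hG (hw.hasOddCycle (fun _ => G.irrefl) hodd)

end OddCycle

theorem hasMonoOddCycle_of_hasOddCycle {X κ : Type*} {c : X → X → κ}
    (hsymm : ∀ x y, c x y = c y x) {α : κ}
    (h : HasOddCycle (SimpleGraph.fromRel fun x y => c x y = α).Adj) : HasMonoOddCycle c := by
  obtain ⟨k, hk3, hk, x, hinj, hx⟩ := h
  refine ⟨k, hk3, hk, x, hinj, α, fun j => ?_⟩
  obtain ⟨-, h | h⟩ := hx j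
  exacts [h, hsymm _ _ ▸ h]

/-- Every odd-cycle-free colouring is isomorphic to a `δ`-colouring: if
`c : [X]² → κ` has no monochromatic odd cycle, there is an injection `ι : X → 2^κ`
such that `ι x (c x y) ≠ ι y (c x y)` for all distinct `x, y`. -/
theorem stmt13 {X κ : Type*} (c : X → X → κ) (hsymm : ∀ x y, c x y = c y x)
    (hfree : ¬ HasMonoOddCycle c) :
    ∃ ι : X → (κ → Bool), Function.Injective ι ∧
      ∀ x y : X, x ≠ y → ι x (c x y) ≠ ι y (c x y) := by
  have hcol (α : κ) : (SimpleGraph.fromRel fun x y => c x y = α).Colorable 2 :=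
    SimpleGraph.colorable_two_of_not_hasOddCycle fun h =>
      hfree (hasMonoOddCycle_of_hasOddCycle hsymm h)
  let ι (x : X) (α : κ) : Bool := finTwoEquiv ((hcol α).some x)
  have hι (x y : X) (hne : x ≠ y) : ι x (c x y) ≠ ι y (c x y) :=
    finTwoEquiv.injective.ne ((hcol _).some.valid ⟨hne, Or.inl rfl⟩)
  exact ⟨ι, fun x y h => by_contra fun hne => hι x y hne (congrFun h _), hι⟩
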